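/- arXiv:2107.11433 — 3 statements merged into one kernel-verified Lean document; each statement's English description precedes it below -/
import Mathlib

section
/- Let δ_t ≥ 0 and r_t ≥ 0 be sequences satisfying η(1 − LBη/2) r_t ≤ (1 + Lη²A) δ_t − δ_{t+1} + LCη²/2 + ηDγ^H for all t, where η > 0, L, A, B, C, D ≥ 0, γ ∈ [0,1), H > 0, and η < 2/(LB) (interpreted as no constraint when B = 0). Then min_{0≤t≤T−1} r_t ≤ (2δ₀(1 + Lη²A)^T)/(ηT(2 − LBη)) + LCη/(2 − LBη) + 2Dγ^H/(2 − LBη). -/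
theorem stmt_5 (δ r : ℕ → ℝ) (hδ : ∀ t, 0 ≤ δ t) (hr : ∀ t, 0 ≤ r t)
    (η L A B C D γ : ℝ) (H : ℕ)
    (hη : 0 < η) (hL : 0 ≤ L) (hA : 0 ≤ A) (hB : 0 ≤ B) (hC : 0 ≤ C) (hD : 0 ≤ D)
    (hγ0 : 0 ≤ γ) (hγ1 : γ < 1) (hH : 0 < H)
    (hηB : L * B * η < 2)
    (hrec : ∀ t, η * (1 - L * B * η / 2) * r t
      ≤ (1 + L * η ^ 2 * A) * δ t - δ (t + 1) + L * C * η ^ 2 / 2 + η * D * γ ^ H)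
    (T : ℕ) (hT : 0 < T) :
    (Finset.range T).inf' (Finset.nonempty_range_iff.mpr hT.ne') r
      ≤ 2 * δ 0 * (1 + L * η ^ 2 * A) ^ T / (η * T * (2 - L * B * η))
        + L * C * η / (2 - L * B * η) + 2 * D * γ ^ H / (2 - L * B * η) := by
  obtain ⟨ρ, hρdef⟩ : ∃ x : ℝ, x = 1 + L * η ^ 2 * A := ⟨_, rfl⟩
  obtain ⟨c, hcdef⟩ : ∃ x : ℝ, x = η * (1 - L * B * η / 2) := ⟨_, rfl⟩
  obtain ⟨E, hEdef⟩ : ∃ x : ℝ, x = L * C * η ^ 2 / 2 + η * D * γ ^ H := ⟨_, rfl⟩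
  obtain ⟨m, hmdef⟩ : ∃ x : ℝ,
      x = (Finset.range T).inf' (Finset.nonempty_range_iff.mpr hT.ne') r := ⟨_, rfl⟩
  rw [← hρdef, ← hmdef]
  have hρ1 : (1:ℝ) ≤ ρ := by
    rw [hρdef]; nlinarith [mul_nonneg (mul_nonneg hL (sq_nonneg η)) hA]
  have hρ0 : (0:ℝ) < ρ := by linarith
  have hc : 0 < c := by rw [hcdef]; apply mul_pos hη; linarith
  have hE : 0 ≤ E := by
    rw [hEdef]
    have h1 : (0:ℝ) ≤ γ ^ H := pow_nonneg hγ0 H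
    have h2 : 0 ≤ L * C * η ^ 2 / 2 := by positivity
    have h3 : 0 ≤ η * D * γ ^ H := by positivity
    linarith
  have hm0 : 0 ≤ m := by
    obtain ⟨t, ht, hval⟩ := Finset.exists_mem_eq_inf' (Finset.nonempty_range_iff.mpr hT.ne') r
    rw [hmdef, hval]; exact hr t
  obtain ⟨S, hSdef⟩ : ∃ x : ℝ, x = ∑ t ∈ Finset.range T, (1/ρ)^(t+1) := ⟨_, rfl⟩
  have hinv : 0 ≤ 1/ρ := by positivity
  have hterm : ∀ t ∈ Finset.range T, c * m * (1/ρ)^(t+1)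
      ≤ (δ t / ρ^t - δ (t+1) / ρ^(t+1)) + E * (1/ρ)^(t+1) := by
    intro t ht
    have hmr : m ≤ r t := hmdef ▸ Finset.inf'_le r ht
    have h1 : c * r t ≤ ρ * δ t - δ (t+1) + E := by
      rw [hcdef, hρdef, hEdef]; linarith [hrec t]
    have hp : (0:ℝ) ≤ (1/ρ)^(t+1) := pow_nonneg hinv _
    have h2 : c * r t * (1/ρ)^(t+1) ≤ (ρ * δ t - δ (t+1) + E) * (1/ρ)^(t+1) :=
      mul_le_mul_of_nonneg_right h1 hp
    have h3 : c * m * (1/ρ)^(t+1) ≤ c * r t * (1/ρ)^(t+1) :=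
      mul_le_mul_of_nonneg_right (mul_le_mul_of_nonneg_left hmr hc.le) hp
    refine h3.trans (h2.trans_eq ?_)
    have hρne : ρ ≠ 0 := hρ0.ne'
    rw [div_pow, one_pow, pow_succ]
    field_simp
  have hsum : c * m * S ≤ δ 0 + E * S := by
    have hδT : 0 ≤ δ T / ρ^T := div_nonneg (hδ T) (pow_nonneg hρ0.le T)
    calc c * m * S = ∑ t ∈ Finset.range T, c * m * (1/ρ)^(t+1) := by
          rw [hSdef, Finset.mul_sum]
      _ ≤ ∑ t ∈ Finset.range T, ((δ t / ρ^t - δ (t+1) / ρ^(t+1)) + E * (1/ρ)^(t+1)) :=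
          Finset.sum_le_sum hterm
      _ = (δ 0 / ρ^0 - δ T / ρ^T) + E * S := by
          rw [Finset.sum_add_distrib, Finset.sum_range_sub' (fun t => δ t / ρ^t),
            hSdef, Finset.mul_sum]
      _ ≤ δ 0 + E * S := by simp; linarith
  have hSlb : (T:ℝ) * (1/ρ)^T ≤ S := by
    rw [hSdef]
    calc (T:ℝ) * (1/ρ)^T = ∑ _t ∈ Finset.range T, (1/ρ)^T := by
          rw [Finset.sum_const, Finset.card_range, nsmul_eq_mul]
      _ ≤ ∑ t ∈ Finset.range T, (1/ρ)^(t+1) := by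
          apply Finset.sum_le_sum
          intro t ht
          apply pow_le_pow_of_le_one hinv (by rw [div_le_one hρ0]; linarith)
          exact Nat.succ_le_of_lt (Finset.mem_range.mp ht)
  have hT0 : (0:ℝ) < (T:ℝ) := Nat.cast_pos.mpr hT
  have hρT : (0:ℝ) < ρ^T := pow_pos hρ0 T
  have hinvT : (0:ℝ) < (1/ρ)^T := pow_pos (by positivity) T
  have hS0 : 0 < S := lt_of_lt_of_le (by positivity) hSlb
  have hmain : m * (c * T) ≤ δ 0 * ρ^T + E * T := by
    by_cases hcase : c * m ≤ E
    · have h0 : 0 ≤ δ 0 * ρ^T := mul_nonneg (hδ 0) hρT.le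
      nlinarith
    · push_neg at hcase
      have h1 : (c * m - E) * ((T:ℝ) * (1/ρ)^T) ≤ (c * m - E) * S :=
        mul_le_mul_of_nonneg_left hSlb (by linarith)
      have h2 : (c * m - E) * S ≤ δ 0 := by nlinarith
      have h3 : (c * m - E) * ((T:ℝ) * (1/ρ)^T) ≤ δ 0 := h1.trans h2
      have h4 : (1/ρ)^T * ρ^T = 1 := by
        rw [div_pow, one_pow]; field_simp
      have h5 := mul_le_mul_of_nonneg_right h3 hρT.le
      have heq : (c * m - E) * ((T:ℝ) * (1/ρ)^T) * ρ^T = (c * m - E) * T := by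
        rw [show (c * m - E) * ((T:ℝ) * (1/ρ)^T) * ρ^T
            = (c * m - E) * (T:ℝ) * ((1/ρ)^T * ρ^T) by ring, h4, mul_one]
      have h6 : (c * m - E) * (T:ℝ) ≤ δ 0 * ρ^T := heq ▸ h5
      linarith [h6, mul_nonneg hE hT0.le]
  have key : m ≤ (δ 0 * ρ^T + E * T) / (c * T) := by
    rw [le_div_iff₀ (mul_pos hc hT0)]; linarith
  refine key.trans_eq ?_
  have h2LBη : (0:ℝ) < 2 - L * B * η := by linarith
  rw [hcdef, hEdef]
  field_simp
  ring
end

section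
/- Suppose J is L-smooth on ℝ^d, the truncated-gradient condition |⟨∇J_H(θ), ∇J_H(θ) − ∇J(θ)⟩| ≤ Dγ^H holds, and the stochastic update θ_{t+1} = θ_t + η ĝ_t with E[ĝ_t | θ_t] = ∇J_H(θ_t) and E[‖ĝ_t‖² | θ_t] ≤ 2A(J* − J(θ_t)) + B‖∇J_H(θ_t)‖² + C. Then E[J* − J(θ_{t+1})] + η(1 − LBη/2)·E‖∇J_H(θ_t)‖² ≤ (1 + Lη²A)·E[J* − J(θ_t)] + LCη²/2 + ηDγ^H. -/
open MeasureTheory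

theorem stmt_17 {Ω : Type*} [MeasurableSpace Ω] (P : Measure Ω) [IsProbabilityMeasure P]
    (d : ℕ) (J JH : EuclideanSpace ℝ (Fin d) → ℝ)
    (Jstar L η A B C D γ : ℝ) (H : ℕ)
    (hη : 0 < η) (hL : 0 ≤ L) (hA : 0 ≤ A) (hB : 0 ≤ B) (hC : 0 ≤ C) (hD : 0 ≤ D)
    (hγ0 : 0 ≤ γ) (hγ1 : γ < 1)
    (hJ : Differentiable ℝ J) (hJH : Differentiable ℝ JH)
    (hbdd : BddAbove (Set.range J)) (hJstar : Jstar = ⨆ θ, J θ)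
    (hsmooth : ∀ θ θ' : EuclideanSpace ℝ (Fin d),
      |J θ' - J θ - (inner ℝ (gradient J θ) (θ' - θ) : ℝ)| ≤ L / 2 * ‖θ' - θ‖ ^ 2)
    (htrunc : ∀ θ : EuclideanSpace ℝ (Fin d),
      |(inner ℝ (gradient JH θ) (gradient JH θ - gradient J θ) : ℝ)| ≤ D * γ ^ H)
    (θt : EuclideanSpace ℝ (Fin d)) (g : Ω → EuclideanSpace ℝ (Fin d))
    (hgint : Integrable g P) (hg2 : Integrable (fun ω => ‖g ω‖ ^ 2) P)
    (hmean : (∫ ω, g ω ∂P) = gradient JH θt)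
    (hABC : (∫ ω, ‖g ω‖ ^ 2 ∂P)
      ≤ 2 * A * (Jstar - J θt) + B * ‖gradient JH θt‖ ^ 2 + C) :
    (∫ ω, (Jstar - J (θt + η • g ω)) ∂P)
        + η * (1 - L * B * η / 2) * ‖gradient JH θt‖ ^ 2
      ≤ (1 + L * η ^ 2 * A) * (Jstar - J θt) + L * C * η ^ 2 / 2 + η * D * γ ^ H := by
  have hsup : ∀ θ, J θ ≤ Jstar := fun θ => hJstar ▸ le_ciSup hbdd θ
  set u := gradient J θt with hu
  set v := gradient JH θt with hv
  -- pointwise smoothness bound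
  have hpt : ∀ ω, Jstar - J (θt + η • g ω)
      ≤ Jstar - J θt - η * (inner ℝ u (g ω) : ℝ) + L / 2 * η ^ 2 * ‖g ω‖ ^ 2 := by
    intro ω
    have h := hsmooth θt (θt + η • g ω)
    have hsub : θt + η • g ω - θt = η • g ω := by abel
    rw [hsub] at h
    have h2 : (inner ℝ u (η • g ω) : ℝ) = η * inner ℝ u (g ω) := real_inner_smul_right _ _ _
    have h3 : ‖η • g ω‖ ^ 2 = η ^ 2 * ‖g ω‖ ^ 2 := by
      rw [norm_smul, mul_pow, Real.norm_eq_abs, sq_abs]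
    have h1 := (abs_le.mp h).1
    rw [h2, h3] at h1
    nlinarith [h1]
  have hφ : Integrable (fun ω => (inner ℝ u (g ω) : ℝ)) P :=
    (innerSL ℝ u).integrable_comp hgint
  have hφint : (∫ ω, (inner ℝ u (g ω) : ℝ) ∂P) = (inner ℝ u v : ℝ) := by
    rw [← hmean]
    have h := ((innerSL ℝ u).integral_comp_comm hgint).symm
    simp only [innerSL_apply_apply] at h
    exact h.symm
  have hi1 : Integrable (fun ω => Jstar - J θt - η * (inner ℝ u (g ω) : ℝ)) P :=
    (integrable_const _).sub (hφ.const_mul η)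
  have hi2 : Integrable (fun ω => L / 2 * η ^ 2 * ‖g ω‖ ^ 2) P := hg2.const_mul _
  have hhi : Integrable
      (fun ω => Jstar - J θt - η * (inner ℝ u (g ω) : ℝ) + L / 2 * η ^ 2 * ‖g ω‖ ^ 2) P :=
    hi1.add hi2
  have hmono : (∫ ω, (Jstar - J (θt + η • g ω)) ∂P)
      ≤ ∫ ω, (Jstar - J θt - η * (inner ℝ u (g ω) : ℝ) + L / 2 * η ^ 2 * ‖g ω‖ ^ 2) ∂P := by
    refine integral_mono_of_nonneg ?_ hhi ?_
    · filter_upwards with ω; simpa using hsup (θt + η • g ω)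
    · filter_upwards with ω; exact hpt ω
  have hIh : (∫ ω, (Jstar - J θt - η * (inner ℝ u (g ω) : ℝ) + L / 2 * η ^ 2 * ‖g ω‖ ^ 2) ∂P)
      = (Jstar - J θt) - η * (inner ℝ u v : ℝ) + L / 2 * η ^ 2 * (∫ ω, ‖g ω‖ ^ 2 ∂P) := by
    rw [integral_add hi1 hi2,
        integral_sub (integrable_const _) (hφ.const_mul η),
        integral_const, integral_const_mul, integral_const_mul, hφint]
    simp
  rw [hIh] at hmono
  have hid : (inner ℝ u v : ℝ) = ‖v‖ ^ 2 - (inner ℝ v (v - u) : ℝ) := by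
    rw [inner_sub_right, real_inner_self_eq_norm_sq, real_inner_comm]
    ring
  have htr := (abs_le.mp (htrunc θt)).2
  have hS := hABC
  have hnn := hsup θt
  have hc : (0:ℝ) ≤ L / 2 * η ^ 2 := by positivity
  nlinarith [mul_le_mul_of_nonneg_left hS hc, hη.le, mul_le_mul_of_nonneg_left htr hη.le]
end

section
/- Let r_t ≥ 0 satisfy, for t > t₀, the recursion r_t ≤ ((c + t − t₀ − 2)/(c + t − t₀)) r_{t−1} + K₁/(c + t − t₀)² + K₂/(c + t − t₀), where c ≥ 2 and K₁, K₂ ≥ 0. Then for all T > t₀, (c + T − t₀)² r_T ≤ c² r_{t₀} + K₁(T − t₀) + K₂ ∑_{t=t₀+1}^{T} (c + t − t₀). -/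
lemma aux_18 (d a x k1 k2 : ℝ) (hd : d ≠ 0) :
    d ^ 2 * (a / d * x + k1 / d ^ 2 + k2 / d) = d * a * x + k1 + k2 * d := by
  field_simp

theorem stmt_18 (r : ℕ → ℝ) (hr : ∀ t, 0 ≤ r t) (t0 : ℕ) (c K1 K2 : ℝ)
    (hc : 2 ≤ c) (hK1 : 0 ≤ K1) (hK2 : 0 ≤ K2)
    (hrec : ∀ t, t0 < t →
      r t ≤ (c + (t : ℝ) - (t0 : ℝ) - 2) / (c + (t : ℝ) - (t0 : ℝ)) * r (t - 1)
        + K1 / (c + (t : ℝ) - (t0 : ℝ)) ^ 2 + K2 / (c + (t : ℝ) - (t0 : ℝ))) :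
    ∀ T, t0 < T →
      (c + (T : ℝ) - (t0 : ℝ)) ^ 2 * r T
        ≤ c ^ 2 * r t0 + K1 * ((T : ℝ) - (t0 : ℝ))
          + K2 * ∑ t ∈ Finset.Icc (t0 + 1) T, (c + (t : ℝ) - (t0 : ℝ)) := by
  intro T hT
  induction T, hT using Nat.le_induction with
  | base =>
    have h := hrec (t0 + 1) (by omega)
    simp only [Nat.add_sub_cancel] at h
    push_cast at h ⊢
    rw [Finset.Icc_self, Finset.sum_singleton]
    push_cast
    have he : c + ((t0:ℝ) + 1) - t0 = c + 1 := by ring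
    rw [he] at h ⊢
    have hd : (0:ℝ) < c + 1 := by linarith
    have h2 := mul_le_mul_of_nonneg_left h (by positivity : (0:ℝ) ≤ (c + 1) ^ 2)
    rw [aux_18 _ _ _ _ _ hd.ne'] at h2
    nlinarith [hr t0, hr (t0 + 1)]
  | succ T hT ih =>
    have h := hrec (T + 1) (by omega)
    simp only [Nat.add_sub_cancel] at h
    have hTt0 : (t0:ℝ) ≤ T := Nat.cast_le.mpr (by omega)
    push_cast at h ⊢
    have hd : (0:ℝ) < c + ((T:ℝ) + 1) - ↑t0 := by linarith
    have h2 := mul_le_mul_of_nonneg_left h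
      (by positivity : (0:ℝ) ≤ (c + ((T:ℝ) + 1) - ↑t0) ^ 2)
    rw [aux_18 _ _ _ _ _ hd.ne'] at h2
    rw [Finset.sum_Icc_succ_top (by omega : t0 + 1 ≤ T + 1)]
    push_cast
    have key : (c + ((T:ℝ) + 1) - ↑t0) * (c + ((T:ℝ) + 1) - ↑t0 - 2) * r T
        ≤ (c + (T:ℝ) - ↑t0) ^ 2 * r T :=
      mul_le_mul_of_nonneg_right (by nlinarith) (hr T)
    linarith
end
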